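/- The kernel of the surjective ℚ-algebra homomorphism i* : R_Q → R_Fl (given by ρ ↦ ξ, b₁ ↦ −3h, b₂ ↦ 3h², d₂ ↦ 3h²) is the ideal of R_Q generated by the classes of b₂−d₂, b₁²−3d₂, d₂−b₁ρ+3ρ², b₁b₂ and d₂². Equivalently, the induced map ℚ[ρ,b₁,b₂,d₂]/(I_Q + ⟨b₂−d₂, b₁²−3d₂, d₂−b₁ρ+3ρ², b₁b₂, d₂²⟩) → R_Fl is a ℚ-algebra isomorphism. -/

import Mathlib

open MvPolynomial

noncomputable section

/-- Variables of ℚ[ρ,b₁,b₂,d₂]: `X 0 = ρ`, `X 1 = b₁`, `X 2 = b₂`, `X 3 = d₂`. -/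
abbrev PQ := MvPolynomial (Fin 4) ℚ

/-- The ideal I_Q presenting the Chow ring of Q = ℙ(U). -/
def IQ : Ideal PQ := Ideal.span
  { X 1 ^ 2 * X 3 - 3 * X 3 ^ 2,
    X 1 ^ 2 * X 2 - X 2 * X 3 - 3 * X 3 ^ 2,
    X 1 ^ 4 + 3 * X 2 ^ 2 - 9 * X 2 * X 3 - 3 * X 3 ^ 2,
    2 * X 1 * X 2 * X 3 - 3 * X 1 * X 3 ^ 2,
    3 * X 1 * X 2 ^ 2 - 7 * X 1 * X 3 ^ 2,
    X 0 ^ 12 + 3 * X 0 ^ 11 * X 1 + 3 * X 0 ^ 10 * (X 1 ^ 2 + 2 * X 2 - X 3)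
      + X 0 ^ 9 * (-X 1 ^ 3 + 12 * X 1 * X 2 + 2 * X 1 * X 3)
      + 3 * X 0 ^ 8 * (9 * X 2 ^ 2 - 16 * X 2 * X 3 + 17 * X 3 ^ 2)
      + 28 * X 0 ^ 7 * X 1 * X 3 ^ 2 + 56 * X 0 ^ 6 * X 3 ^ 3 }

/-- The Chow ring R_Q of Q. -/
abbrev RQ := PQ ⧸ IQ

/-- Variables of ℚ[h,ξ]: `X 0 = h`, `X 1 = ξ`.  The ideal ⟨h³, h²+hξ+ξ²⟩. -/
def JFl : Ideal (MvPolynomial (Fin 2) ℚ) :=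
  Ideal.span {X 0 ^ 3, X 0 ^ 2 + X 0 * X 1 + X 1 ^ 2}

/-- The Chow ring of the full flag variety Fl(V). -/
abbrev RFl := MvPolynomial (Fin 2) ℚ ⧸ JFl

/-- The homomorphism ℚ[ρ,b₁,b₂,d₂] → R_Fl given by ρ ↦ ξ, b₁ ↦ −3h, b₂ ↦ 3h², d₂ ↦ 3h². -/
def φ : PQ →ₐ[ℚ] RFl :=
  aeval fun i => Ideal.Quotient.mk JFl
    (![X 1, -3 * X 0, 3 * X 0 ^ 2, 3 * X 0 ^ 2] i)

/-- The extra kernel generators b₂−d₂, b₁²−3d₂, d₂−b₁ρ+3ρ², b₁b₂, d₂². -/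
def K : Set PQ :=
  { X 2 - X 3, X 1 ^ 2 - 3 * X 3, X 3 - X 1 * X 0 + 3 * X 0 ^ 2, X 1 * X 2, X 3 ^ 2 }

/-!
In `R_Fl` we have `h³ = 0` and `ξ³ = h³ + (ξ - h)(h² + hξ + ξ²) = 0`, so `φ` kills every
generator of `I_Q` (each is a multiple of `h⁴`, or of `ξ⁶`) and every element of `K`.
Conversely `h ↦ -b₁/3`, `ξ ↦ ρ` respects the relations of `R_Fl` modulo `I_Q + ⟨K⟩`: there
`b₁³ = 3b₁d₂ = 3b₁b₂ = 0` and `b₁²/9 - b₁ρ/3 + ρ² = (d₂ - b₁ρ + 3ρ²)/3 = 0`. This gives an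
inverse of the induced map `ℚ[ρ,b₁,b₂,d₂]/(I_Q + ⟨K⟩) → R_Fl`, hence `ker φ = I_Q + ⟨K⟩`,
whose image in `R_Q` is generated by the classes of `K`.
-/

section FlagRelations

local notation "𝔥" => Ideal.Quotient.mk JFl (X 0)
local notation "ξ" => Ideal.Quotient.mk JFl (X 1)

lemma h_cube_eq_zero : 𝔥 ^ 3 = 0 := by
  rw [← map_pow, Ideal.Quotient.eq_zero_iff_mem]
  exact Ideal.subset_span (by simp)

lemma flag_relation : 𝔥 ^ 2 + 𝔥 * ξ + ξ ^ 2 = 0 := by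
  simp only [← map_pow, ← map_mul, ← map_add, Ideal.Quotient.eq_zero_iff_mem]
  exact Ideal.subset_span (by simp)

lemma ξ_cube_eq_zero : ξ ^ 3 = 0 := by
  linear_combination h_cube_eq_zero + (ξ - 𝔥) * flag_relation

@[simp] lemma φ_X (i : Fin 4) :
    φ (X i) = ![ξ, -(3 * 𝔥), 3 * 𝔥 ^ 2, 3 * 𝔥 ^ 2] i := by
  fin_cases i <;> simp [φ, map_ofNat]

lemma IQ_le_ker_φ : IQ ≤ RingHom.ker φ := by
  rw [IQ, Ideal.span_le]
  rintro p hp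
  simp only [Set.mem_insert_iff, Set.mem_singleton_iff] at hp
  rcases hp with rfl | rfl | rfl | rfl | rfl | rfl
  rotate_left 5
  · have ρ_pow_six_mul (r : PQ) : φ (X 0 ^ 6 * r) = 0 := by
      simp [pow_mul ξ 3 2, ξ_cube_eq_zero]
    rw [SetLike.mem_coe, RingHom.mem_ker]
    convert ρ_pow_six_mul (X 0 ^ 6 + 3 * X 0 ^ 5 * X 1 + 3 * X 0 ^ 4 * (X 1 ^ 2 + 2 * X 2 - X 3)
        + X 0 ^ 3 * (-X 1 ^ 3 + 12 * X 1 * X 2 + 2 * X 1 * X 3)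
        + 3 * X 0 ^ 2 * (9 * X 2 ^ 2 - 16 * X 2 * X 3 + 17 * X 3 ^ 2)
        + 28 * X 0 * X 1 * X 3 ^ 2 + 56 * X 3 ^ 3) using 2
    ring
  all_goals simp [map_ofNat]
  · ring
  · linear_combination (-9 * 𝔥) * h_cube_eq_zero
  · ring
  · linear_combination (27 * 𝔥 ^ 2) * h_cube_eq_zero
  · linear_combination (108 * 𝔥 ^ 2) * h_cube_eq_zero

lemma span_K_le_ker_φ : Ideal.span K ≤ RingHom.ker φ := by
  rw [K, Ideal.span_le]
  rintro p hp
  simp only [Set.mem_insert_iff, Set.mem_singleton_iff] at hp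
  rcases hp with rfl | rfl | rfl | rfl | rfl <;> simp [map_ofNat]
  · ring
  · linear_combination 3 * flag_relation
  · linear_combination (-9 : RFl) * h_cube_eq_zero
  · linear_combination (9 * 𝔥) * h_cube_eq_zero

end FlagRelations

lemma algebraMap_inv_three_mul_three (A : Type*) [Semiring A] [Algebra ℚ A] :
    algebraMap ℚ A 3⁻¹ * 3 = 1 := by
  rw [← map_ofNat (algebraMap ℚ A) 3, ← map_mul]
  norm_num

def φQuot : PQ ⧸ (IQ ⊔ Ideal.span K) →ₐ[ℚ] RFl :=
  Ideal.Quotient.liftₐ _ φ fun _ hp => sup_le IQ_le_ker_φ span_K_le_ker_φ hp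

section FlagSection

local notation "𝔮" => Ideal.Quotient.mk (IQ ⊔ Ideal.span K)

lemma quotient_relations :
    𝔮 (X 2) - 𝔮 (X 3) = 0 ∧ 𝔮 (X 1) ^ 2 - 3 * 𝔮 (X 3) = 0 ∧
      𝔮 (X 3) - 𝔮 (X 1) * 𝔮 (X 0) + 3 * 𝔮 (X 0) ^ 2 = 0 ∧
      𝔮 (X 1) * 𝔮 (X 2) = 0 := by
  have h : ∀ k ∈ ({X 2 - X 3, X 1 ^ 2 - 3 * X 3, X 3 - X 1 * X 0 + 3 * X 0 ^ 2, X 1 * X 2,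
      X 3 ^ 2} : Set PQ), 𝔮 k = 0 := fun k hk =>
    Ideal.Quotient.eq_zero_iff_mem.2 (Ideal.mem_sup_right (Ideal.subset_span hk))
  simp only [Set.mem_insert_iff, Set.mem_singleton_iff, forall_eq_or_imp, forall_eq, map_sub,
    map_add, map_mul, map_pow, map_ofNat] at h
  exact ⟨h.1, h.2.1, h.2.2.1, h.2.2.2.1⟩

def flagSectionPoly : MvPolynomial (Fin 2) ℚ →ₐ[ℚ] PQ ⧸ (IQ ⊔ Ideal.span K) :=
  aeval ![-(algebraMap ℚ _ 3⁻¹ * 𝔮 (X 1)), 𝔮 (X 0)]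

lemma JFl_le_ker_flagSectionPoly : JFl ≤ RingHom.ker flagSectionPoly := by
  obtain ⟨hb, hb₁, hρ, hb₁b₂⟩ := quotient_relations
  have hc := algebraMap_inv_three_mul_three (PQ ⧸ (IQ ⊔ Ideal.span K))
  rw [JFl, Ideal.span_le]
  rintro p hp
  simp only [Set.mem_insert_iff, Set.mem_singleton_iff] at hp
  rcases hp with rfl | rfl <;> simp [flagSectionPoly]
  all_goals generalize algebraMap ℚ (PQ ⧸ (IQ ⊔ Ideal.span K)) 3⁻¹ = c at hc ⊢
  · linear_combination (-c ^ 3 * 𝔮 (X 1)) * hb₁ + (3 * c ^ 3 * 𝔮 (X 1)) * hb - 3 * c ^ 3 * hb₁b₂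
  · linear_combination c ^ 2 * hb₁ + c * hρ + (c * 𝔮 (X 3) - 𝔮 (X 0) ^ 2) * hc

def flagSection : RFl →ₐ[ℚ] PQ ⧸ (IQ ⊔ Ideal.span K) :=
  Ideal.Quotient.liftₐ JFl flagSectionPoly fun _ hp => JFl_le_ker_flagSectionPoly hp

@[simp] lemma flagSection_mk (p : MvPolynomial (Fin 2) ℚ) :
    flagSection (Ideal.Quotient.mk JFl p) = flagSectionPoly p := rfl

@[simp] lemma φQuot_mk (p : PQ) : φQuot (𝔮 p) = φ p := rfl

lemma flagSection_φ (p : PQ) : flagSection (φ p) = 𝔮 p := by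
  suffices flagSection.comp φ = Ideal.Quotient.mkₐ ℚ _ from DFunLike.congr_fun this p
  obtain ⟨hb, hb₁, -, -⟩ := quotient_relations
  have hc := algebraMap_inv_three_mul_three (PQ ⧸ (IQ ⊔ Ideal.span K))
  refine MvPolynomial.algHom_ext fun i => ?_
  fin_cases i <;> simp [flagSectionPoly, map_ofNat]
  all_goals generalize algebraMap ℚ (PQ ⧸ (IQ ⊔ Ideal.span K)) 3⁻¹ = c at hc ⊢
  · linear_combination 𝔮 (X 1) * hc
  · linear_combination 3 * c ^ 2 * hb₁ - hb + 𝔮 (X 3) * (3 * c + 1) * hc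
  · linear_combination 3 * c ^ 2 * hb₁ + 𝔮 (X 3) * (3 * c + 1) * hc

lemma φQuot_comp_flagSection : φQuot.comp flagSection = AlgHom.id ℚ RFl := by
  refine Ideal.Quotient.algHom_ext _ (MvPolynomial.algHom_ext fun i => ?_)
  fin_cases i <;> simp [flagSectionPoly]
  linear_combination Ideal.Quotient.mk JFl (X 0) * algebraMap_inv_three_mul_three RFl

end FlagSection

lemma ker_φ : RingHom.ker φ = IQ ⊔ Ideal.span K := by
  refine le_antisymm (fun p hp => ?_) (sup_le IQ_le_ker_φ span_K_le_ker_φ)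
  rw [← Ideal.Quotient.eq_zero_iff_mem, ← flagSection_φ, RingHom.mem_ker.1 hp, map_zero]

/-- The kernel of the induced map i* : R_Q → R_Fl is the ideal of R_Q generated by the
classes of b₂−d₂, b₁²−3d₂, d₂−b₁ρ+3ρ², b₁b₂, d₂²; equivalently, the induced map
ℚ[ρ,b₁,b₂,d₂]/(I_Q + ⟨those five⟩) → R_Fl is a ℚ-algebra isomorphism. -/
theorem kernel_of_restriction :
    (∀ ψ : RQ →ₐ[ℚ] RFl, (∀ p : PQ, ψ (Ideal.Quotient.mk IQ p) = φ p) →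
      RingHom.ker ψ = Ideal.span (Ideal.Quotient.mk IQ '' K)) ∧
    ∃ e : (PQ ⧸ (IQ ⊔ Ideal.span K)) ≃ₐ[ℚ] RFl,
      ∀ p : PQ, e (Ideal.Quotient.mk (IQ ⊔ Ideal.span K) p) = φ p := by
  refine ⟨fun ψ hψ => ?_, ?_⟩
  · ext x
    obtain ⟨p, rfl⟩ := Ideal.Quotient.mk_surjective x
    rw [RingHom.mem_ker, hψ, ← RingHom.mem_ker, ker_φ, ← Ideal.map_span,
      Ideal.mem_quotient_iff_mem_sup, sup_comm]
  · have flagSection_comp_φQuot : flagSection.comp φQuot = AlgHom.id ℚ _ :=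
      Ideal.Quotient.algHom_ext _ (AlgHom.ext flagSection_φ)
    exact ⟨AlgEquiv.ofAlgHom φQuot flagSection φQuot_comp_flagSection flagSection_comp_φQuot,
      fun _ => rfl⟩
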